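/- Let H be a complex Hilbert space, A, B, C, D bounded linear operators on H, and T = [[A,B],[C,D]] the operator matrix on H⊕H. Then w(T) ≥ max{w(A), w(D), w(B+C)/2, w(B−C)/2}. -/

import Mathlib

/-!
Evaluating the quadratic form of `T` at `(x, 0)` and `(0, x)` gives those of `A` and `D`.
At `(x, y)` and `(x, -y)` the diagonal terms agree, so `⟪B y, x⟫ + ⟪C x, y⟫` is half the difference
of two values of the quadratic form of `T`, hence bounded by `w(T) (‖x‖² + ‖y‖²)`.
The choices `y = x` and `y = i x` turn it into `⟪(B + C) x, x⟫` and `-i ⟪(B - C) x, x⟫`.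
-/

open scoped InnerProductSpace

/-- Numerical radius of a bounded linear operator on a complex inner product space. -/
noncomputable def numRadius {E : Type*} [NormedAddCommGroup E] [InnerProductSpace ℂ E]
    (T : E →L[ℂ] E) : ℝ :=
  sSup {r : ℝ | ∃ x : E, ‖x‖ = 1 ∧ r = ‖⟪T x, x⟫_ℂ‖}

/-- Numerical-radius orthogonality: `T ⊥_w A`. -/
def nrOrth {E : Type*} [NormedAddCommGroup E] [InnerProductSpace ℂ E]
    (T A : E →L[ℂ] E) : Prop :=
  ∀ l : ℂ, numRadius T ≤ numRadius (T + l • A)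

section NumRadius

variable {E : Type*} [NormedAddCommGroup E] [InnerProductSpace ℂ E]

lemma numRadius_bddAbove (S : E →L[ℂ] E) :
    BddAbove {r : ℝ | ∃ x : E, ‖x‖ = 1 ∧ r = ‖⟪S x, x⟫_ℂ‖} := by
  refine ⟨‖S‖, ?_⟩
  rintro r ⟨x, hx, rfl⟩
  calc ‖⟪S x, x⟫_ℂ‖ ≤ ‖S x‖ * ‖x‖ := norm_inner_le_norm _ _
    _ ≤ ‖S‖ * ‖x‖ * ‖x‖ := by gcongr; exact S.le_opNorm x
    _ = ‖S‖ := by rw [hx, mul_one, mul_one]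

lemma numRadius_nonneg (S : E →L[ℂ] E) : 0 ≤ numRadius S :=
  Real.sSup_nonneg (by rintro r ⟨x, -, rfl⟩; exact norm_nonneg _)

lemma norm_inner_le_numRadius (S : E →L[ℂ] E) {x : E} (hx : ‖x‖ = 1) :
    ‖⟪S x, x⟫_ℂ‖ ≤ numRadius S :=
  le_csSup (numRadius_bddAbove S) ⟨x, hx, rfl⟩

lemma numRadius_le {S : E →L[ℂ] E} {c : ℝ} (hc : 0 ≤ c)
    (h : ∀ x : E, ‖x‖ = 1 → ‖⟪S x, x⟫_ℂ‖ ≤ c) : numRadius S ≤ c :=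
  Real.sSup_le (by rintro r ⟨x, hx, rfl⟩; exact h x hx) hc

lemma norm_inner_self_le_numRadius_mul_sq (S : E →L[ℂ] E) (v : E) :
    ‖⟪S v, v⟫_ℂ‖ ≤ numRadius S * ‖v‖ ^ 2 := by
  rcases eq_or_ne v 0 with rfl | hv
  · simp
  set u : E := ((‖v‖ : ℂ)⁻¹) • v
  have hu : ‖u‖ = 1 := norm_smul_inv_norm hv
  have hvu : v = (‖v‖ : ℂ) • u := by
    rw [smul_smul, mul_inv_cancel₀ (by exact_mod_cast norm_ne_zero_iff.2 hv), one_smul]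
  have hinner : ‖⟪S v, v⟫_ℂ‖ = ‖v‖ ^ 2 * ‖⟪S u, u⟫_ℂ‖ := by
    conv_lhs => rw [hvu]
    simp only [map_smul, inner_smul_left, inner_smul_right, norm_mul, Complex.norm_conj,
      Complex.norm_real, norm_norm]
    ring
  rw [hinner, mul_comm (numRadius S)]
  exact mul_le_mul_of_nonneg_left (norm_inner_le_numRadius S hu) (sq_nonneg _)

end NumRadius

def IsBlockMatrix {H : Type*} [NormedAddCommGroup H] [InnerProductSpace ℂ H]
    (T : WithLp 2 (H × H) →L[ℂ] WithLp 2 (H × H)) (A B C D : H →L[ℂ] H) : Prop :=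
  ∀ x y : H, T (WithLp.toLp 2 (x, y)) = WithLp.toLp 2 (A x + B y, C x + D y)

namespace IsBlockMatrix

variable {H : Type*} [NormedAddCommGroup H] [InnerProductSpace ℂ H]
  {T : WithLp 2 (H × H) →L[ℂ] WithLp 2 (H × H)} {A B C D : H →L[ℂ] H}

lemma inner_apply_toLp (hT : IsBlockMatrix T A B C D) (x y : H) :
    ⟪T (WithLp.toLp 2 (x, y)), WithLp.toLp 2 (x, y)⟫_ℂ =
      ⟪A x, x⟫_ℂ + ⟪B y, x⟫_ℂ + ⟪C x, y⟫_ℂ + ⟪D y, y⟫_ℂ := by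
  rw [hT, WithLp.prod_inner_apply]
  simp only [inner_add_left]
  ring

lemma numRadius_topLeft_le (hT : IsBlockMatrix T A B C D) : numRadius A ≤ numRadius T := by
  refine numRadius_le (numRadius_nonneg T) fun x hx => ?_
  have hnorm : ‖WithLp.toLp 2 (x, (0 : H))‖ = 1 := by rw [WithLp.norm_toLp_fst, hx]
  simpa [hT.inner_apply_toLp] using norm_inner_le_numRadius T hnorm

lemma numRadius_bottomRight_le (hT : IsBlockMatrix T A B C D) :
    numRadius D ≤ numRadius T := by
  refine numRadius_le (numRadius_nonneg T) fun x hx => ?_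
  have hnorm : ‖WithLp.toLp 2 ((0 : H), x)‖ = 1 := by rw [WithLp.norm_toLp_snd, hx]
  simpa [hT.inner_apply_toLp] using norm_inner_le_numRadius T hnorm

lemma norm_inner_offDiag_le (hT : IsBlockMatrix T A B C D) (x y : H) :
    ‖⟪B y, x⟫_ℂ + ⟪C x, y⟫_ℂ‖ ≤ numRadius T * (‖x‖ ^ 2 + ‖y‖ ^ 2) := by
  set p := WithLp.toLp 2 (x, y)
  set q := WithLp.toLp 2 (x, -y)
  have hdiff : ⟪T p, p⟫_ℂ - ⟪T q, q⟫_ℂ = 2 * (⟪B y, x⟫_ℂ + ⟪C x, y⟫_ℂ) := by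
    simp only [p, q, hT.inner_apply_toLp, map_neg, inner_neg_left, inner_neg_right]
    ring
  have hp : ‖p‖ ^ 2 = ‖x‖ ^ 2 + ‖y‖ ^ 2 := WithLp.prod_norm_sq_eq_of_L2 p
  have hq : ‖q‖ ^ 2 = ‖x‖ ^ 2 + ‖y‖ ^ 2 := by
    rw [WithLp.prod_norm_sq_eq_of_L2 q]
    simp [q]
  have h2 : 2 * ‖⟪B y, x⟫_ℂ + ⟪C x, y⟫_ℂ‖ ≤ 2 * (numRadius T * (‖x‖ ^ 2 + ‖y‖ ^ 2)) :=
    calc 2 * ‖⟪B y, x⟫_ℂ + ⟪C x, y⟫_ℂ‖ = ‖⟪T p, p⟫_ℂ - ⟪T q, q⟫_ℂ‖ := by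
          rw [hdiff, norm_mul, Complex.norm_ofNat]
      _ ≤ ‖⟪T p, p⟫_ℂ‖ + ‖⟪T q, q⟫_ℂ‖ := norm_sub_le _ _
      _ ≤ numRadius T * ‖p‖ ^ 2 + numRadius T * ‖q‖ ^ 2 :=
          add_le_add (norm_inner_self_le_numRadius_mul_sq T p)
            (norm_inner_self_le_numRadius_mul_sq T q)
      _ = 2 * (numRadius T * (‖x‖ ^ 2 + ‖y‖ ^ 2)) := by rw [hp, hq]; ring
  linarith

lemma numRadius_add_offDiag_le (hT : IsBlockMatrix T A B C D) :
    numRadius (B + C) ≤ 2 * numRadius T := by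
  refine numRadius_le (by linarith [numRadius_nonneg T]) fun x hx => ?_
  simpa [inner_add_left, hx, one_add_one_eq_two, mul_comm] using hT.norm_inner_offDiag_le x x

lemma numRadius_sub_offDiag_le (hT : IsBlockMatrix T A B C D) :
    numRadius (B - C) ≤ 2 * numRadius T := by
  refine numRadius_le (by linarith [numRadius_nonneg T]) fun x hx => ?_
  have hrot : ⟪B (Complex.I • x), x⟫_ℂ + ⟪C x, Complex.I • x⟫_ℂ =
      -Complex.I * ⟪(B - C) x, x⟫_ℂ := by
    simp only [map_smul, inner_smul_left, inner_smul_right, Complex.conj_I,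
      sub_apply, inner_sub_left]
    ring
  have h := hT.norm_inner_offDiag_le x (Complex.I • x)
  rw [hrot, norm_mul, norm_neg, Complex.norm_I, one_mul, norm_smul, Complex.norm_I, one_mul,
    hx] at h
  linarith

end IsBlockMatrix

theorem stmt15_general {H : Type*} [NormedAddCommGroup H] [InnerProductSpace ℂ H]
    (A B C D : H →L[ℂ] H)
    (T : WithLp 2 (H × H) →L[ℂ] WithLp 2 (H × H))
    (hT : ∀ x y : H, T ((WithLp.equiv 2 (H × H)).symm (x, y)) =
      (WithLp.equiv 2 (H × H)).symm (A x + B y, C x + D y)) :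
    max (max (numRadius A) (numRadius D))
      (max (numRadius (B + C) / 2) (numRadius (B - C) / 2)) ≤ numRadius T := by
  have hT : IsBlockMatrix T A B C D := hT
  refine max_le (max_le hT.numRadius_topLeft_le hT.numRadius_bottomRight_le) (max_le ?_ ?_)
  · exact (div_le_iff₀' two_pos).2 hT.numRadius_add_offDiag_le
  · exact (div_le_iff₀' two_pos).2 hT.numRadius_sub_offDiag_le

theorem stmt15 {H : Type*} [NormedAddCommGroup H] [InnerProductSpace ℂ H] [CompleteSpace H]
    (A B C D : H →L[ℂ] H)
    (T : WithLp 2 (H × H) →L[ℂ] WithLp 2 (H × H))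
    (hT : ∀ x y : H, T ((WithLp.equiv 2 (H × H)).symm (x, y)) =
      (WithLp.equiv 2 (H × H)).symm (A x + B y, C x + D y)) :
    max (max (numRadius A) (numRadius D))
      (max (numRadius (B + C) / 2) (numRadius (B - C) / 2)) ≤ numRadius T :=
  stmt15_general A B C D T hT
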